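/- arXiv:2311.08729 — 5 statements merged into one kernel-verified Lean document; each statement's English description precedes it below -/
import Mathlib

section
/- Let D ⊆ ℂⁿ be a bounded homogeneous open set containing the origin and let F : D × ℂⁿ → [0,∞) be invariant under holomorphic automorphisms of D. Suppose there is a constant c > 0 such that for every holomorphic map f : D → D with f(0) = 0 one has F(0, f'(0)v) ≤ √c · F(0, v) for all v ∈ ℂⁿ. Then for every holomorphic map g : D → D, every z ∈ D and every v ∈ ℂⁿ one has F(g(z), g'(z)v) ≤ √c · F(z, v). -/
/-- On a bounded homogeneous open set `D ⊆ ℂⁿ` containing the origin, if an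
`Aut(D)`-invariant metric function `F` satisfies the Schwarz inequality at the origin for all
origin-preserving holomorphic self-maps, then it satisfies it everywhere for all holomorphic
self-maps. -/
theorem invariant_schwarz_from_origin (n : ℕ) (D : Set (Fin n → ℂ))
    (hD_open : IsOpen D) (hD_bounded : Bornology.IsBounded D)
    (hD0 : (0 : Fin n → ℂ) ∈ D)
    (hD_homog : ∀ z ∈ D, ∃ φ ψ : (Fin n → ℂ) → (Fin n → ℂ),
      (Set.MapsTo φ D D ∧ Set.MapsTo ψ D D ∧
        (∀ w ∈ D, DifferentiableAt ℂ φ w) ∧ (∀ w ∈ D, DifferentiableAt ℂ ψ w) ∧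
        (∀ w ∈ D, ψ (φ w) = w) ∧ (∀ w ∈ D, φ (ψ w) = w)) ∧ φ z = 0)
    (F : (Fin n → ℂ) → (Fin n → ℂ) → ℝ)
    (hF_nonneg : ∀ z ∈ D, ∀ v, 0 ≤ F z v)
    (hF_inv : ∀ φ ψ : (Fin n → ℂ) → (Fin n → ℂ),
      Set.MapsTo φ D D → Set.MapsTo ψ D D →
      (∀ w ∈ D, DifferentiableAt ℂ φ w) → (∀ w ∈ D, DifferentiableAt ℂ ψ w) →
      (∀ w ∈ D, ψ (φ w) = w) → (∀ w ∈ D, φ (ψ w) = w) →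
      ∀ z ∈ D, ∀ v, F (φ z) (fderiv ℂ φ z v) = F z v)
    (c : ℝ) (hc : 0 < c)
    (hSchwarz0 : ∀ f : (Fin n → ℂ) → (Fin n → ℂ), Set.MapsTo f D D →
      (∀ w ∈ D, DifferentiableAt ℂ f w) → f 0 = 0 →
      ∀ v, F 0 (fderiv ℂ f 0 v) ≤ Real.sqrt c * F 0 v) :
    ∀ g : (Fin n → ℂ) → (Fin n → ℂ), Set.MapsTo g D D →
      (∀ w ∈ D, DifferentiableAt ℂ g w) →
      ∀ z ∈ D, ∀ v, F (g z) (fderiv ℂ g z v) ≤ Real.sqrt c * F z v := by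
  intro g hg hg' z hz v
  obtain ⟨φ, ψ, ⟨hφD, hψD, hφd, hψd, hψφ, hφψ⟩, hφz⟩ := hD_homog z hz
  obtain ⟨η, θ, ⟨hηD, hθD, hηd, hθd, hθη, hηθ⟩, hηgz⟩ := hD_homog (g z) (hg hz)
  -- ψ 0 = z
  have hψ0 : ψ 0 = z := by rw [← hφz, hψφ z hz]
  set f : (Fin n → ℂ) → (Fin n → ℂ) := η ∘ g ∘ ψ with hf
  have hfD : Set.MapsTo f D D := fun w hw => hηD (hg (hψD hw))
  have hfd : ∀ w ∈ D, DifferentiableAt ℂ f w := by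
    intro w hw
    have h1 : DifferentiableAt ℂ (g ∘ ψ) w := (hg' _ (hψD hw)).comp w (hψd w hw)
    exact (hηd _ (hg (hψD hw))).comp w h1
  have hf0 : f 0 = 0 := by simp [hf, Function.comp, hψ0, hηgz]
  -- derivative chain
  have h0D : (0 : Fin n → ℂ) ∈ D := hD0
  have hfderiv : fderiv ℂ f 0 = (fderiv ℂ η (g z)).comp
      ((fderiv ℂ g z).comp (fderiv ℂ ψ 0)) := by
    have h1 : fderiv ℂ f 0 = (fderiv ℂ (η ∘ g) (ψ 0)).comp (fderiv ℂ ψ 0) :=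
      fderiv_comp 0 (by rw [hψ0]; exact (hηd _ (hg hz)).comp z (hg' _ hz)) (hψd 0 h0D)
    have h2 : fderiv ℂ (η ∘ g) z = (fderiv ℂ η (g z)).comp (fderiv ℂ g z) :=
      fderiv_comp _ (hηd _ (hg hz)) (hg' _ hz)
    rw [h1, hψ0, h2, ContinuousLinearMap.comp_assoc]
  -- ψ' 0 inverts φ' z
  have hinv : ∀ w, fderiv ℂ ψ 0 (fderiv ℂ φ z w) = w := by
    intro w
    have heq : (ψ ∘ φ) =ᶠ[nhds z] id := by
      filter_upwards [hD_open.mem_nhds hz] with x hx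
      exact hψφ x hx
    have : fderiv ℂ (ψ ∘ φ) z = fderiv ℂ (id : (Fin n → ℂ) → (Fin n → ℂ)) z :=
      heq.fderiv_eq
    rw [fderiv_comp z (by rw [hφz]; exact hψd 0 h0D) (hφd z hz), hφz, fderiv_id] at this
    calc fderiv ℂ ψ 0 (fderiv ℂ φ z w)
        = ((fderiv ℂ ψ 0).comp (fderiv ℂ φ z)) w := rfl
      _ = w := by rw [this]; rfl
  have key := hSchwarz0 f hfD hfd hf0 (fderiv ℂ φ z v)
  have hL : F 0 (fderiv ℂ f 0 (fderiv ℂ φ z v)) = F (g z) (fderiv ℂ g z v) := by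
    rw [hfderiv]
    have : ((fderiv ℂ η (g z)).comp ((fderiv ℂ g z).comp (fderiv ℂ ψ 0)))
        (fderiv ℂ φ z v) = fderiv ℂ η (g z) (fderiv ℂ g z v) := by
      simp [ContinuousLinearMap.comp_apply, hinv v]
    rw [this, ← hηgz]
    exact hF_inv η θ hηD hθD hηd hθd hθη hηθ (g z) (hg hz) (fderiv ℂ g z v)
  have hR : F 0 (fderiv ℂ φ z v) = F z v := by
    rw [← hφz]
    exact hF_inv φ ψ hφD hψD hφd hψd hψφ hφψ z hz v
  rw [hL, hR] at key
  exact key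
end

section
/- Let f : M_{m×n}(ℂ) → ℝ satisfy f(BVC) = f(V) for all V ∈ M_{m×n}(ℂ), all B ∈ U(m) and all C ∈ U(n). Then for any V, W ∈ M_{m×n}(ℂ): if tr((VV*)^α) = tr((WW*)^α) for every α = 1, …, m, then f(V) = f(W). In particular, f(V) depends only on the quantities tr((VV*)^α), α = 1, …, m. -/
/-!
The matrices `V V*` and `W W*` are Hermitian, and `tr((V V*)^α)` is the `α`-th power sum of the
eigenvalues of `V V*`. By Newton's identities the first `m` power sums determine the elementary
symmetric functions, hence the characteristic polynomial, hence the (sorted) eigenvalues; so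
`W W* = B (V V*) B*` for a unitary `B`. Now `B V` and `W` have the same Gram matrix, so
`(B V)* x ↦ W* x` is an isometry on a subspace of `ℂⁿ`, which extends to a unitary `C*` with
`B V C = W`. Invariance of `f` gives `f V = f (B V C) = f W`.
-/

open Matrix Polynomial

section SymmetricFunctions

variable {σ R : Type*} [Fintype σ] [CommRing R]

theorem MvPolynomial.prod_X_sub_C_eq_sum_aeval_esymm (x : σ → R) :
    ∏ i, (Polynomial.X - Polynomial.C (x i)) = ∑ j ∈ Finset.range (Fintype.card σ + 1),
      (-1) ^ j * (Polynomial.C (aeval x (esymm σ R j)) * Polynomial.X ^ (Fintype.card σ - j)) := by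
  have := Multiset.prod_X_sub_X_eq_sum_esymm (Finset.univ.val.map x)
  rw [Multiset.map_map, Multiset.card_map, Finset.card_val, Finset.card_univ] at this
  simp only [aeval_esymm_eq_multiset_esymm]
  exact this

variable [IsDomain R] [CharZero R]

/-- Newton's identity `k e_k = ±∑_{i<k} ±e_i p_{k-i}` determines `e_k` from lower-degree data,
because `k ≠ 0` is cancellable in characteristic zero. -/
theorem MvPolynomial.aeval_esymm_eq_of_aeval_psum_eq {x y : σ → R} {N : ℕ}
    (h : ∀ j, 1 ≤ j → j ≤ N → aeval x (psum σ R j) = aeval y (psum σ R j)) :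
    ∀ k ≤ N, aeval x (esymm σ R k) = aeval y (esymm σ R k) := by
  intro k
  induction k using Nat.strong_induction_on with
  | _ k ih =>
    intro hkN
    rcases Nat.eq_zero_or_pos k with rfl | hk
    · simp
    have hx := congrArg (aeval x) (mul_esymm_eq_sum σ R k)
    have hy := congrArg (aeval y) (mul_esymm_eq_sum σ R k)
    simp only [map_mul, map_sum, map_pow, map_neg, map_one, map_natCast] at hx hy
    refine mul_left_cancel₀ (Nat.cast_ne_zero.mpr hk.ne' : (k : R) ≠ 0) ?_
    rw [hx, hy]
    congr 1
    refine Finset.sum_congr rfl fun a ha => ?_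
    rw [Finset.mem_filter, Finset.HasAntidiagonal.mem_antidiagonal] at ha
    rw [ih a.1 ha.2 (by omega), h a.2 (by omega) (by omega)]

theorem Finset.prod_X_sub_C_eq_of_sum_pow_eq {x y : σ → R}
    (h : ∀ k, 1 ≤ k → k ≤ Fintype.card σ → ∑ i, x i ^ k = ∑ i, y i ^ k) :
    ∏ i, (X - C (x i)) = ∏ i, (X - C (y i)) := by
  have hesymm := MvPolynomial.aeval_esymm_eq_of_aeval_psum_eq (x := x) (y := y)
    (N := Fintype.card σ) (by simpa [MvPolynomial.psum] using h)
  simp only [MvPolynomial.prod_X_sub_C_eq_sum_aeval_esymm]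
  refine Finset.sum_congr rfl fun k hk => ?_
  rw [hesymm k (Nat.lt_succ_iff.mp (Finset.mem_range.mp hk))]

end SymmetricFunctions

namespace Matrix.IsHermitian

open Unitary

variable {𝕜 n : Type*} [RCLike 𝕜] [Fintype n] [DecidableEq n] {A B : Matrix n n 𝕜}

theorem trace_pow_eq_sum_eigenvalues_pow (hA : A.IsHermitian) (k : ℕ) :
    (A ^ k).trace = ∑ i, (hA.eigenvalues i : 𝕜) ^ k := by
  conv_lhs => rw [hA.spectral_theorem, ← map_pow, conjStarAlgAut_apply, trace_mul_cycle,
    coe_star_mul_self, one_mul, diagonal_pow, trace_diagonal]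
  rfl

theorem eigenvalues_eq_of_trace_pow_eq (hA : A.IsHermitian) (hB : B.IsHermitian)
    (h : ∀ k, 1 ≤ k → k ≤ Fintype.card n → (A ^ k).trace = (B ^ k).trace) :
    hA.eigenvalues = hB.eigenvalues := by
  rw [eigenvalues_eq_eigenvalues_iff, hA.charpoly_eq, hB.charpoly_eq]
  refine Finset.prod_X_sub_C_eq_of_sum_pow_eq fun k hk hkn => ?_
  rw [← trace_pow_eq_sum_eigenvalues_pow, ← trace_pow_eq_sum_eigenvalues_pow, h k hk hkn]

theorem exists_conjStarAlgAut_eq_of_eigenvalues_eq (hA : A.IsHermitian) (hB : B.IsHermitian)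
    (h : hA.eigenvalues = hB.eigenvalues) :
    ∃ U : unitaryGroup n 𝕜, conjStarAlgAut 𝕜 _ U A = B := by
  refine ⟨hB.eigenvectorUnitary * star hA.eigenvectorUnitary, ?_⟩
  rw [conjStarAlgAut_mul_apply, hA.conjStarAlgAut_star_eigenvectorUnitary, h,
    ← hB.spectral_theorem]

end Matrix.IsHermitian

section UnitaryEquivalence

variable {𝕜 : Type*} [RCLike 𝕜]

theorem LinearMap.exists_linearIsometryEquiv_comp_eq_of_norm_eq {E F : Type*} [AddCommGroup E]
    [Module 𝕜 E] [NormedAddCommGroup F] [InnerProductSpace 𝕜 F] [FiniteDimensional 𝕜 F]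
    {S T : E →ₗ[𝕜] F} (h : ∀ x, ‖S x‖ = ‖T x‖) :
    ∃ U : F ≃ₗᵢ[𝕜] F, U.toLinearMap ∘ₗ S = T := by
  -- `S x ↦ T x` is a well-defined isometry on `range S`; extend it to all of `F`.
  have hker : ker S ≤ ker T := fun x hx => by
    rw [mem_ker, ← norm_eq_zero, ← h, norm_eq_zero, ← mem_ker]
    exact hx
  let φ : range S →ₗ[𝕜] F := (ker S).liftQ T hker ∘ₗ S.quotKerEquivRange.symm.toLinearMap
  have hφ : ∀ x, φ ⟨S x, mem_range_self S x⟩ = T x := fun x => by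
    simp [φ, quotKerEquivRange_symm_apply_image]
  let ψ : range S →ₗᵢ[𝕜] F := ⟨φ, by rintro ⟨_, x, rfl⟩; rw [hφ, ← h]; rfl⟩
  refine ⟨ψ.extend.toLinearIsometryEquiv rfl, LinearMap.ext fun x => ?_⟩
  exact (ψ.extend_apply ⟨S x, mem_range_self S x⟩).trans (hφ x)

variable {m n : Type*} [Fintype m] [Fintype n] [DecidableEq n]

theorem LinearIsometryEquiv.exists_mem_unitaryGroup_toEuclideanLin_eq
    (U : EuclideanSpace 𝕜 n ≃ₗᵢ[𝕜] EuclideanSpace 𝕜 n) :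
    ∃ M ∈ unitaryGroup n 𝕜, toEuclideanLin M = U.toLinearMap := by
  refine ⟨(toEuclideanCLM (𝕜 := 𝕜) (n := n)).symm U, ?_, ?_⟩
  · exact Unitary.map_mem _ (Unitary.linearIsometryEquiv.symm U).2
  · rw [← coe_toEuclideanCLM_eq_toEuclideanLin, StarAlgEquiv.apply_symm_apply]
    rfl

theorem Matrix.norm_toEuclideanLin_conjTranspose_sq [DecidableEq m] (A : Matrix m n 𝕜)
    (x : EuclideanSpace 𝕜 m) :
    ‖toEuclideanLin Aᴴ x‖ ^ 2 = RCLike.re (inner 𝕜 x (toEuclideanLin (A * Aᴴ) x)) := by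
  rw [@norm_sq_eq_re_inner 𝕜, ← LinearMap.adjoint_inner_right, ←
    toEuclideanLin_conjTranspose_eq_adjoint, conjTranspose_conjTranspose, toLpLin_mul_same,
    LinearMap.comp_apply]

theorem Matrix.exists_mul_mem_unitaryGroup_eq_of_mul_conjTranspose_eq [DecidableEq m]
    {A B : Matrix m n 𝕜} (h : A * Aᴴ = B * Bᴴ) :
    ∃ C ∈ unitaryGroup n 𝕜, A * C = B := by
  have hnorm : ∀ x, ‖toEuclideanLin Aᴴ x‖ = ‖toEuclideanLin Bᴴ x‖ := fun x =>
    (sq_eq_sq₀ (norm_nonneg _) (norm_nonneg _)).mp <| by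
      rw [norm_toEuclideanLin_conjTranspose_sq, norm_toEuclideanLin_conjTranspose_sq, h]
  obtain ⟨U, hU⟩ := LinearMap.exists_linearIsometryEquiv_comp_eq_of_norm_eq hnorm
  obtain ⟨M, hM, hMU⟩ := U.exists_mem_unitaryGroup_toEuclideanLin_eq
  refine ⟨star M, Unitary.star_mem hM, ?_⟩
  have hMA : M * Aᴴ = Bᴴ := toEuclideanLin.injective <| by rw [toLpLin_mul_same, hMU, hU]
  rw [star_eq_conjTranspose, ← conjTranspose_conjTranspose A, ← conjTranspose_mul, hMA,
    conjTranspose_conjTranspose]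

end UnitaryEquivalence

/-- A `U(m) × U(n)`-invariant function on `M_{m×n}(ℂ)` depends only on the
traces `tr((VV*)^α)`, `α = 1, …, m`. -/
theorem unitary_invariant_depends_on_traces (m n : ℕ)
    (f : Matrix (Fin m) (Fin n) ℂ → ℝ)
    (hinv : ∀ V : Matrix (Fin m) (Fin n) ℂ,
      ∀ B ∈ Matrix.unitaryGroup (Fin m) ℂ, ∀ C ∈ Matrix.unitaryGroup (Fin n) ℂ,
        f (B * V * C) = f V) :
    ∀ V W : Matrix (Fin m) (Fin n) ℂ,
      (∀ α : ℕ, 1 ≤ α → α ≤ m → ((V * Vᴴ) ^ α).trace = ((W * Wᴴ) ^ α).trace) →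
      f V = f W := by
  intro V W htr
  have hV := isHermitian_mul_conjTranspose_self V
  have hW := isHermitian_mul_conjTranspose_self W
  have heig : hV.eigenvalues = hW.eigenvalues :=
    hV.eigenvalues_eq_of_trace_pow_eq hW (by simpa using htr)
  obtain ⟨B, hB⟩ := hV.exists_conjStarAlgAut_eq_of_eigenvalues_eq hW heig
  obtain ⟨C, hC, hBVC⟩ :
      ∃ C ∈ unitaryGroup (Fin n) ℂ, (B : Matrix (Fin m) (Fin m) ℂ) * V * C = W :=
    exists_mul_mem_unitaryGroup_eq_of_mul_conjTranspose_eq <| by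
      rw [← hB, Unitary.conjStarAlgAut_apply, conjTranspose_mul, star_eq_conjTranspose]
      simp only [Matrix.mul_assoc]
  rw [← hBVC, hinv V B B.2 C hC]
end

section
/- Let N ≥ 2 and let ξ ∈ ℂᴺ be a row vector. Set r = Σ_{j=1}^N |ξ_j|² and ρ = |Σ_{j=1}^N ξ_j²| (so 0 ≤ ρ ≤ r). Then there exist θ ∈ ℝ and a real orthogonal matrix A ∈ O(N,ℝ) such that e^{iθ} ξ A = ( √((r+ρ)/2), i·√((r−ρ)/2), 0, …, 0 ). -/
/-!
Multiplying `ξ` by a phase `e^{iθ}` with `2θ = -arg (ξξ')` makes `ηη' = ρ` real, where `η = e^{iθ}ξ`.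
Writing `η = u + iv` with `u, v` real, this says `u·u - v·v = ρ` and `u·v = 0`, while
`u·u + v·v = ηη* = r`. So `u` and `v` are orthogonal of lengths `√((r+ρ)/2)` and `√((r-ρ)/2)`,
and an orthogonal matrix (from an orthonormal basis extending `u/|u|, v/|v|`) sends them to
these multiples of the first two coordinate vectors.
-/

open Matrix

namespace Complex

theorem exists_exp_mul_I_sq_mul_eq_norm (z : ℂ) : ∃ θ : ℝ, exp (θ * I) ^ 2 * z = ‖z‖ := by
  refine ⟨-(arg z / 2), ?_⟩
  nth_rewrite 2 [← norm_mul_exp_arg_mul_I z]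
  rw [sq, ← exp_add, mul_left_comm, ← exp_add]
  push_cast
  ring_nf
  simp

variable {ι : Type*} [Fintype ι] (z : ι → ℂ)

theorem re_sum_sq :
    (∑ j, z j ^ 2).re = (fun j => (z j).re) ⬝ᵥ (fun j => (z j).re) -
      (fun j => (z j).im) ⬝ᵥ (fun j => (z j).im) := by
  simp [re_sum, dotProduct, sq, Finset.sum_sub_distrib]

theorem im_sum_sq :
    (∑ j, z j ^ 2).im = 2 * (fun j => (z j).re) ⬝ᵥ (fun j => (z j).im) := by
  simp only [im_sum, sq, mul_im, dotProduct, Finset.mul_sum]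
  exact Finset.sum_congr rfl fun j _ => by ring

theorem sum_norm_sq :
    ∑ j, ‖z j‖ ^ 2 = (fun j => (z j).re) ⬝ᵥ (fun j => (z j).re) +
      (fun j => (z j).im) ⬝ᵥ (fun j => (z j).im) := by
  simp [dotProduct, Complex.sq_norm, normSq_apply, Finset.sum_add_distrib]

theorem vecMul_map_ofReal {κ : Type*} (A : Matrix ι κ ℝ) (j : κ) :
    (z ᵥ* A.map ofReal) j =
      ((fun i => (z i).re) ᵥ* A) j + ((fun i => (z i).im) ᵥ* A) j * I := by
  apply Complex.ext <;> simp [vecMul, dotProduct, re_sum, im_sum]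

end Complex

theorem exists_orthonormalBasis_eq_norm_smul {𝕜 E ι : Type*} [RCLike 𝕜] [NormedAddCommGroup E]
    [InnerProductSpace 𝕜 E] [FiniteDimensional 𝕜 E] [Fintype ι]
    (hcard : Module.finrank 𝕜 E = Fintype.card ι) (f : ι → E)
    (hf : Pairwise fun i j => inner 𝕜 (f i) (f j) = 0) :
    ∃ B : OrthonormalBasis ι 𝕜 E, ∀ i, f i = (‖f i‖ : 𝕜) • B i := by
  set s : Set ι := {i | f i ≠ 0}
  have hw : Orthonormal 𝕜 (s.domRestrict fun i => (‖f i‖⁻¹ : 𝕜) • f i) := by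
    refine ⟨fun i => norm_smul_inv_norm i.2, fun i j hij => ?_⟩
    simp [Set.domRestrict, inner_smul_left, inner_smul_right, hf (Subtype.coe_ne_coe.mpr hij)]
  obtain ⟨B, hB⟩ := hw.exists_orthonormalBasis_extension_of_card_eq hcard
  refine ⟨B, fun i => ?_⟩
  by_cases hi : f i = 0
  · simp [hi]
  · rw [hB i hi, smul_smul, mul_inv_cancel₀ (by simpa using hi), one_smul]

section OrthogonalGroup

variable {ι : Type*} [Fintype ι]

theorem vecMul_toMatrix_basisFun (B : OrthonormalBasis ι ℝ (EuclideanSpace ℝ ι)) (x : ι → ℝ)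
    (j : ι) : (x ᵥ* (EuclideanSpace.basisFun ι ℝ).toBasis.toMatrix B) j = x ⬝ᵥ (B j).ofLp := by
  simp [vecMul, dotProduct, Module.Basis.toMatrix_apply]

variable [DecidableEq ι]

theorem exists_mem_orthogonalGroup_vecMul_eq_single (f : ι → ι → ℝ)
    (hf : Pairwise fun i j => f i ⬝ᵥ f j = 0) :
    ∃ A ∈ orthogonalGroup ι ℝ, ∀ i, f i ᵥ* A = Pi.single i √(f i ⬝ᵥ f i) := by
  obtain ⟨B, hB⟩ := exists_orthonormalBasis_eq_norm_smul (𝕜 := ℝ) (by simp)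
    (fun i => WithLp.toLp 2 (f i)) fun i j hij => by
      simpa [EuclideanSpace.inner_eq_star_dotProduct, dotProduct_comm] using hf hij
  refine ⟨_, (EuclideanSpace.basisFun ι ℝ).toMatrix_orthonormalBasis_mem_orthogonal B,
    fun i => funext fun j => ?_⟩
  have hfi : f i = ‖WithLp.toLp 2 (f i)‖ • (B i).ofLp := congrArg WithLp.ofLp (hB i)
  have hnorm : ‖WithLp.toLp 2 (f i)‖ = √(f i ⬝ᵥ f i) := by
    simp [EuclideanSpace.norm_eq, dotProduct, sq]
  have hBij : (B i).ofLp ⬝ᵥ (B j).ofLp = if j = i then 1 else 0 := by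
    simpa [EuclideanSpace.inner_eq_star_dotProduct, dotProduct_comm] using B.inner_eq_ite j i
  conv_lhs => rw [vecMul_toMatrix_basisFun, hfi, smul_dotProduct, hBij]
  simp [← hnorm, Pi.single_apply]

theorem exists_mem_orthogonalGroup_vecMul_eq_single_pair {i₀ i₁ : ι} (h : i₀ ≠ i₁)
    (u v : ι → ℝ) (huv : u ⬝ᵥ v = 0) :
    ∃ A ∈ orthogonalGroup ι ℝ,
      u ᵥ* A = Pi.single i₀ √(u ⬝ᵥ u) ∧ v ᵥ* A = Pi.single i₁ √(v ⬝ᵥ v) := by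
  let f : ι → ι → ℝ := fun i => if i = i₀ then u else if i = i₁ then v else 0
  have hf : Pairwise fun i j => f i ⬝ᵥ f j = 0 := by
    intro i j hij
    simp only [f]
    split_ifs <;> simp_all [dotProduct_comm]
  obtain ⟨A, hA, hfA⟩ := exists_mem_orthogonalGroup_vecMul_eq_single f hf
  refine ⟨A, hA, ?_, ?_⟩
  · simpa [f] using hfA i₀
  · simpa [f, h.symm] using hfA i₁

end OrthogonalGroup

/-- normal form of a complex row vector under the action
`ξ ↦ e^{iθ} ξ A`, `A ∈ O(N,ℝ)`: every `ξ ∈ ℂᴺ` can be brought to the form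
`(√((r+ρ)/2), i√((r−ρ)/2), 0, …, 0)` where `r = ξξ*` and `ρ = |ξξ'|`. -/
theorem rowVector_normal_form (N : ℕ) (hN : 2 ≤ N) (ξ : Fin N → ℂ)
    (r ρ : ℝ)
    (hr : r = ∑ j, ‖ξ j‖ ^ 2)
    (hρ : ρ = ‖∑ j, ξ j ^ 2‖) :
    ∃ θ : ℝ, ∃ A ∈ Matrix.orthogonalGroup (Fin N) ℝ,
      (fun j => Complex.exp (θ * Complex.I) *
          Matrix.vecMul ξ (A.map (Complex.ofReal)) j) =
      (fun j : Fin N =>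
        if (j : ℕ) = 0 then (Real.sqrt ((r + ρ) / 2) : ℂ)
        else if (j : ℕ) = 1 then Complex.I * (Real.sqrt ((r - ρ) / 2) : ℂ)
        else 0) := by
  obtain ⟨θ, hθ⟩ := Complex.exists_exp_mul_I_sq_mul_eq_norm (∑ j, ξ j ^ 2)
  set η := Complex.exp (θ * Complex.I) • ξ
  have hsq : ∑ j, η j ^ 2 = ρ := by simp [η, mul_pow, ← Finset.mul_sum, hθ, hρ]
  have hnorm : ∑ j, ‖η j‖ ^ 2 = r := by simp [η, hr]
  set u := fun j => (η j).re
  set v := fun j => (η j).im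
  have hdiff : u ⬝ᵥ u - v ⬝ᵥ v = ρ := by simpa [hsq] using (Complex.re_sum_sq η).symm
  have horth : 2 * u ⬝ᵥ v = 0 := by simpa [hsq] using (Complex.im_sum_sq η).symm
  have hsum : u ⬝ᵥ u + v ⬝ᵥ v = r := by rw [← hnorm, Complex.sum_norm_sq]
  obtain ⟨A, hA, hu, hv⟩ := exists_mem_orthogonalGroup_vecMul_eq_single_pair
    (i₀ := ⟨0, by omega⟩) (i₁ := ⟨1, by omega⟩) (by simp [Fin.ext_iff]) u v (by linarith)
  have huu : u ⬝ᵥ u = (r + ρ) / 2 := by linarith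
  have hvv : v ⬝ᵥ v = (r - ρ) / 2 := by linarith
  refine ⟨θ, A, hA, funext fun j => ?_⟩
  rw [← smul_eq_mul, ← Pi.smul_apply, ← smul_vecMul, Complex.vecMul_map_ofReal, hu, hv, huu, hvv]
  rcases j with ⟨_ | _ | j, hj⟩ <;> simp [Fin.ext_iff, mul_comm]
end

section
/- Let h : M_{m×n}(ℂ) × M_{m×n}(ℂ) → ℂ be sesquilinear (complex linear in the first variable, conjugate linear in the second) and Hermitian (h(W,V) = conj(h(V,W))), and suppose h(BVC, BWC) = h(V,W) for all V, W ∈ M_{m×n}(ℂ), all B ∈ U(m) and all C ∈ U(n). Then there exists a real constant c such that h(V,W) = c · tr(V W*) for all V, W ∈ M_{m×n}(ℂ). -/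
/-!
Conjugating by diagonal sign matrices negates one matrix unit `Eᵢⱼ` and fixes the others, so an
invariant form vanishes on pairs of distinct matrix units; conjugating by permutation matrices
moves any `Eᵢⱼ` to any other, so the form takes one value `c` on all pairs `(Eᵢⱼ, Eᵢⱼ)`. Hence
it is `c` times `tr (V Wᴴ)`, and Hermitian symmetry forces `c` to be real.
-/

open Matrix

namespace Matrix

section UnitaryGroup

variable {n α : Type*} [Fintype n] [DecidableEq n] [CommRing α] [StarRing α]

theorem diagonal_mem_unitaryGroup {d : n → α} (hd : ∀ i, d i ∈ unitary α) :
    diagonal d ∈ unitaryGroup n α := by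
  rw [mem_unitaryGroup_iff, star_eq_conjTranspose, diagonal_conjTranspose,
    diagonal_mul_diagonal, ← diagonal_one]
  exact congrArg diagonal (funext fun i => Unitary.mul_star_self_of_mem (hd i))

theorem permMatrix_mem_unitaryGroup (σ : Equiv.Perm n) :
    σ.permMatrix α ∈ unitaryGroup n α := by
  rw [mem_unitaryGroup_iff, star_eq_conjTranspose, conjTranspose_permMatrix, ← permMatrix_mul,
    inv_mul_cancel, permMatrix_one]

end UnitaryGroup

section Single

variable {l m α : Type*} [DecidableEq l] [DecidableEq m] [Semiring α]

theorem diagonal_mul_single [Fintype l] (d : l → α) (i : l) (j : m) (c : α) :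
    diagonal d * single i j c = single i j (d i * c) := by
  ext a b
  by_cases ha : i = a <;> by_cases hb : j = b <;> simp [single, ha, hb]

theorem single_mul_diagonal [Fintype m] (d : m → α) (i : l) (j : m) (c : α) :
    single i j c * diagonal d = single i j (c * d j) := by
  ext a b
  by_cases ha : i = a <;> by_cases hb : j = b <;> simp [single, ha, hb]

theorem permMatrix_mul_single [Fintype l] (σ : Equiv.Perm l) (i : l) (j : m) (c : α) :
    σ.permMatrix α * single i j c = single (σ.symm i) j c := by
  rw [PEquiv.toMatrix_toPEquiv_mul]
  ext a b
  simp [single, Equiv.eq_symm_apply, eq_comm]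

theorem single_mul_permMatrix [Fintype m] (σ : Equiv.Perm m) (i : l) (j : m) (c : α) :
    single i j c * σ.permMatrix α = single i (σ j) c := by
  rw [PEquiv.mul_toMatrix_toPEquiv]
  ext a b
  simp [single, Equiv.eq_symm_apply, eq_comm]

end Single

section TraceForm

variable {ι κ R : Type*} [Fintype ι] [Fintype κ] [CommSemiring R] [StarRing R]

variable (ι κ R) in
def traceMulConjTransposeForm : Matrix ι κ R →ₗ[R] Matrix ι κ R →ₗ⋆[R] R :=
  LinearMap.mk₂'ₛₗ _ _ (fun V W => (V * Wᴴ).trace)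
    (fun _ _ _ => by simp only [Matrix.add_mul, trace_add])
    (fun _ _ _ => by simp only [smul_mul, trace_smul, RingHom.id_apply])
    (fun _ _ _ => by simp only [conjTranspose_add, Matrix.mul_add, trace_add])
    (fun _ _ _ => by
      simp only [conjTranspose_smul, Matrix.mul_smul, trace_smul, starRingEnd_apply])

theorem traceMulConjTransposeForm_apply (V W : Matrix ι κ R) :
    traceMulConjTransposeForm ι κ R V W = (V * Wᴴ).trace := rfl

theorem traceMulConjTransposeForm_single_single [DecidableEq ι] [DecidableEq κ]
    (i k : ι) (j l : κ) :
    traceMulConjTransposeForm ι κ R (single i j 1) (single k l 1) =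
      if i = k ∧ j = l then 1 else 0 := by
  by_cases hik : i = k <;> by_cases hjl : j = l <;>
    simp [traceMulConjTransposeForm_apply, conjTranspose_single, hik, hjl, trace_single_eq_of_ne]

end TraceForm

end Matrix

section InvariantForm

variable {ι κ R : Type*} [Fintype ι] [Fintype κ] [DecidableEq ι] [DecidableEq κ]

def IsUnitarilyInvariant [CommRing R] [StarRing R]
    (F : Matrix ι κ R →ₗ[R] Matrix ι κ R →ₗ⋆[R] R) : Prop :=
  ∀ V W, ∀ B ∈ unitaryGroup ι R, ∀ C ∈ unitaryGroup κ R, F (B * V * C) (B * W * C) = F V W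

namespace IsUnitarilyInvariant

variable {𝕜 : Type*} [RCLike 𝕜] {F : Matrix ι κ 𝕜 →ₗ[𝕜] Matrix ι κ 𝕜 →ₗ⋆[𝕜] 𝕜}
  (hF : IsUnitarilyInvariant F)
include hF

theorem apply_single_single_of_ne_left {i k : ι} (hik : i ≠ k) (j l : κ) :
    F (single i j 1) (single k l 1) = 0 := by
  have hB := diagonal_mem_unitaryGroup (d := Pi.mulSingle i (-1 : 𝕜)) fun r => by
    by_cases hr : r = i <;> simp [Unitary.mem_iff, hr]
  have key := hF (single i j 1) (single k l 1) _ hB 1 (one_mem _)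
  rw [Matrix.mul_one, Matrix.mul_one, diagonal_mul_single, diagonal_mul_single,
    Pi.mulSingle_eq_same, Pi.mulSingle_eq_of_ne' hik, mul_one, mul_one, ← mul_one (-1 : 𝕜),
    ← smul_eq_mul, ← smul_single, map_smul, LinearMap.smul_apply, neg_one_smul,
    CharZero.neg_eq_self_iff] at key
  exact key

theorem apply_single_single_of_ne_right (i k : ι) {j l : κ} (hjl : j ≠ l) :
    F (single i j 1) (single k l 1) = 0 := by
  have hC := diagonal_mem_unitaryGroup (d := Pi.mulSingle j (-1 : 𝕜)) fun r => by
    by_cases hr : r = j <;> simp [Unitary.mem_iff, hr]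
  have key := hF (single i j 1) (single k l 1) 1 (one_mem _) _ hC
  rw [Matrix.one_mul, Matrix.one_mul, single_mul_diagonal, single_mul_diagonal,
    Pi.mulSingle_eq_same, Pi.mulSingle_eq_of_ne' hjl, one_mul, one_mul, ← mul_one (-1 : 𝕜),
    ← smul_eq_mul, ← smul_single, map_smul, LinearMap.smul_apply, neg_one_smul,
    CharZero.neg_eq_self_iff] at key
  exact key

theorem apply_single_single_self (i i' : ι) (j j' : κ) :
    F (single i j 1) (single i j 1) = F (single i' j' 1) (single i' j' 1) := by
  have key := hF (single i j 1) (single i j 1) _ (permMatrix_mem_unitaryGroup (Equiv.swap i i'))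
    _ (permMatrix_mem_unitaryGroup (Equiv.swap j j'))
  rwa [permMatrix_mul_single, single_mul_permMatrix, Equiv.symm_swap, Equiv.swap_apply_left,
    Equiv.swap_apply_left, eq_comm] at key

theorem exists_eq_smul_traceMulConjTransposeForm :
    ∃ c : 𝕜, F = c • traceMulConjTransposeForm ι κ 𝕜 := by
  let b := stdBasis 𝕜 ι κ
  by_cases hne : Nonempty (ι × κ)
  · obtain ⟨i₀, j₀⟩ := hne
    refine ⟨F (single i₀ j₀ 1) (single i₀ j₀ 1), LinearMap.ext_basis b b fun ⟨i, j⟩ ⟨k, l⟩ => ?_⟩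
    rw [LinearMap.smul_apply, LinearMap.smul_apply, stdBasis_eq_single, stdBasis_eq_single,
      traceMulConjTransposeForm_single_single]
    by_cases hik : i = k
    · by_cases hjl : j = l
      · subst hik hjl
        simp [hF.apply_single_single_self i i₀ j j₀]
      · simp [hjl, hF.apply_single_single_of_ne_right i k hjl]
    · simp [hik, hF.apply_single_single_of_ne_left hik j l]
  · exact ⟨0, LinearMap.ext_basis b b fun p _ => (hne ⟨p⟩).elim⟩

end IsUnitarilyInvariant

end InvariantForm

/-- every `U(m) × U(n)`-invariant Hermitian sesquilinear form on `M_{m×n}(ℂ)`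
is a real constant multiple of `(V,W) ↦ tr(V W*)`. -/
theorem invariant_hermitian_form_typeI (m n : ℕ)
    (h : Matrix (Fin m) (Fin n) ℂ → Matrix (Fin m) (Fin n) ℂ → ℂ)
    (hadd₁ : ∀ V V' W, h (V + V') W = h V W + h V' W)
    (hsmul₁ : ∀ (a : ℂ) V W, h (a • V) W = a * h V W)
    (hadd₂ : ∀ V W W', h V (W + W') = h V W + h V W')
    (hsmul₂ : ∀ (a : ℂ) V W, h V (a • W) = starRingEnd ℂ a * h V W)
    (hherm : ∀ V W, h W V = starRingEnd ℂ (h V W))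
    (hinv : ∀ V W : Matrix (Fin m) (Fin n) ℂ,
      ∀ B ∈ Matrix.unitaryGroup (Fin m) ℂ, ∀ C ∈ Matrix.unitaryGroup (Fin n) ℂ,
        h (B * V * C) (B * W * C) = h V W) :
    ∃ c : ℝ, ∀ V W, h V W = (c : ℂ) * (V * Wᴴ).trace := by
  let F : Matrix (Fin m) (Fin n) ℂ →ₗ[ℂ] Matrix (Fin m) (Fin n) ℂ →ₗ⋆[ℂ] ℂ :=
    LinearMap.mk₂'ₛₗ _ _ h hadd₁ hsmul₁ hadd₂ hsmul₂
  obtain ⟨c, hc⟩ := IsUnitarilyInvariant.exists_eq_smul_traceMulConjTransposeForm (F := F) hinv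
  have hF (V W) : h V W = c * (V * Wᴴ).trace := LinearMap.congr_fun₂ hc V W
  have hF_conj (V W) : h V W = starRingEnd ℂ c * (V * Wᴴ).trace := by
    rw [hherm W V, hF, map_mul, ← RCLike.star_def, ← trace_conjTranspose, conjTranspose_mul,
      conjTranspose_conjTranspose]
  refine ⟨c.re, fun V W => ?_⟩
  rw [Complex.re_eq_add_conj]
  linear_combination (hF V W + hF_conj V W) / 2
end

section
/- Fix V ∈ M_{m×n}(ℂ) and an integer α ≥ 1. Consider the function φ : t ↦ tr( ( (I_m − t²VV*)^{-1} V (I_n − t²V*V)^{-1} V* )^α ) of a real variable t, defined for t in a neighborhood of 0 (its values are nonnegative real numbers). Then φ is twice differentiable at t = 0 and φ''(0) = 4α · tr( (VV*)^{α+1} ). -/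
/-!
Write `A = VV*`. The push-through identity `(1 - sVV*)⁻¹ V = V (1 - sV*V)⁻¹` turns the matrix
inside the trace into `(1 - sA)⁻² A` with `s = t²`, so near `0` we have `φ(t) = g(t²)` for
`g(s) = Re tr(((1 - sA)⁻² A)^α)`, a smooth function of `s`. Hence `φ''(0) = 2 g'(0)`, and
since `(1 - sA)⁻² A = A + 2sA² + O(s²)` commutes with `A` to first order,
`g'(0) = 2α Re tr(A^(α+1))`.
-/

open Matrix

/-- The second variation function
`φ(t) = tr(((I − t²VV*)⁻¹ V (I − t²V*V)⁻¹ V*)^α)` along the line `Z = tV`. -/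
noncomputable def secondVariationFn (m n : ℕ) (V : Matrix (Fin m) (Fin n) ℂ) (α : ℕ)
    (t : ℝ) : ℝ :=
  ((((1 - ((t : ℂ) ^ 2) • (V * Vᴴ))⁻¹ * V * (1 - ((t : ℂ) ^ 2) • (Vᴴ * V))⁻¹ * Vᴴ) ^ α).trace).re

open Filter Topology

section NormedAlgebra

variable {𝕜 𝔸 : Type*} [NontriviallyNormedField 𝕜] [NormedRing 𝔸] [NormedAlgebra 𝕜 𝔸]

theorem HasDerivAt.pow_of_commute {f : 𝕜 → 𝔸} {f' : 𝔸} {x : 𝕜} (h : HasDerivAt f f' x)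
    (hc : Commute (f x) f') (n : ℕ) :
    HasDerivAt (fun y ↦ f y ^ n) (n • (f x ^ (n - 1) * f')) x := by
  refine (h.fun_pow' n).congr_deriv ?_
  calc ∑ i ∈ Finset.range n, f x ^ (n.pred - i) * f' * f x ^ i
      = ∑ _i ∈ Finset.range n, f x ^ (n - 1) * f' := by
        refine Finset.sum_congr rfl fun i hi ↦ ?_
        rw [mul_assoc, (hc.symm.pow_right i).eq, ← mul_assoc, ← pow_add,
          Nat.pred_eq_sub_one, Nat.sub_add_cancel (by simp at hi; omega)]
    _ = n • (f x ^ (n - 1) * f') := by simp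

variable [CompleteSpace 𝔸] (a : 𝔸)

theorem hasDerivAt_inverse_one_sub_smul :
    HasDerivAt (fun s : 𝕜 ↦ Ring.inverse (1 - s • a)) a 0 := by
  have hline : HasDerivAt (fun s : 𝕜 ↦ 1 - s • a) (-a) 0 := by
    simpa using ((hasDerivAt_id (0 : 𝕜)).smul_const a).const_sub 1
  exact ((hasFDerivAt_ringInverse (𝕜 := 𝕜) (1 : 𝔸ˣ)).comp_hasDerivAt_of_eq 0 hline
    (by simp)).congr_deriv (by simp)

theorem contDiffAt_inverse_one_sub_smul_sq_mul_pow (n : WithTop ℕ∞) (α : ℕ) :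
    ContDiffAt 𝕜 n (fun s : 𝕜 ↦ (Ring.inverse (1 - s • a) ^ 2 * a) ^ α) 0 := by
  have hline : ContDiffAt 𝕜 n (fun s : 𝕜 ↦ 1 - s • a) 0 := by fun_prop
  have hinv : ContDiffAt 𝕜 n (fun s : 𝕜 ↦ Ring.inverse (1 - s • a)) 0 := by
    have := contDiffAt_ringInverse 𝕜 (n := n) (1 : 𝔸ˣ)
    exact ContDiffAt.comp (g := Ring.inverse) 0 (by simpa using this) hline
  exact ((hinv.pow 2).mul contDiffAt_const).pow α

theorem hasDerivAt_inverse_one_sub_smul_sq_mul_pow (α : ℕ) :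
    HasDerivAt (fun s : 𝕜 ↦ (Ring.inverse (1 - s • a) ^ 2 * a) ^ α)
      ((2 * α) • a ^ (α + 1)) 0 := by
  have hinv := hasDerivAt_inverse_one_sub_smul (𝕜 := 𝕜) a
  have hX0 : Ring.inverse (1 - (0 : 𝕜) • a) ^ 2 * a = a := by
    rw [zero_smul, sub_zero, Ring.inverse_one, one_pow, one_mul]
  have hX : HasDerivAt (fun s : 𝕜 ↦ Ring.inverse (1 - s • a) ^ 2 * a) (2 • a ^ 2) 0 := by
    simp only [pow_two]
    refine ((hinv.mul hinv).mul_const a).congr_deriv ?_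
    rw [zero_smul 𝕜 a, sub_zero, Ring.inverse_one, two_nsmul]
    noncomm_ring
  have hcomm : Commute (Ring.inverse (1 - (0 : 𝕜) • a) ^ 2 * a) (2 • a ^ 2) := by
    rw [hX0]
    exact (Commute.self_pow a 2).smul_right 2
  refine (hX.pow_of_commute hcomm α).congr_deriv ?_
  rw [hX0]
  cases α with
  | zero => simp
  | succ k => rw [mul_smul_comm, ← pow_add, smul_smul, mul_comm, Nat.add_sub_cancel]

end NormedAlgebra

theorem eventually_differentiableAt_and_hasDerivAt_deriv_of_comp_sq {F : Type*} [NormedAddCommGroup F]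
    [NormedSpace ℝ F] {f g : ℝ → F} (hg : ContDiffAt ℝ 2 g 0)
    (hfg : f =ᶠ[𝓝 0] fun t ↦ g (t ^ 2)) :
    (∀ᶠ t in 𝓝 0, DifferentiableAt ℝ f t) ∧ HasDerivAt (deriv f) ((2 : ℝ) • deriv g 0) 0 := by
  have hsq (t : ℝ) : HasDerivAt (fun t : ℝ ↦ t ^ 2) (2 * t) t := by
    simpa using hasDerivAt_pow 2 t
  have hg_diff : ∀ᶠ t in 𝓝 (0 : ℝ), DifferentiableAt ℝ g (t ^ 2) := by
    refine (hsq 0).continuousAt.tendsto.eventually ?_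
    simpa using (hg.eventually (by simp)).mono fun s hs ↦ hs.differentiableAt (by simp)
  have hg' : DifferentiableAt ℝ (deriv g) 0 :=
    ((hg.fderiv_right (m := 1) (by norm_num)).differentiableAt (by simp)).clm_apply
      (differentiableAt_const 1)
  have hf : ∀ᶠ t in 𝓝 0, HasDerivAt f ((2 * t) • deriv g (t ^ 2)) t := by
    filter_upwards [hfg.eventuallyEq_nhds, hg_diff] with t hft hgt
    exact (hgt.hasDerivAt.scomp_of_eq t (hsq t) rfl).congr_of_eventuallyEq hft
  have hf' : deriv f =ᶠ[𝓝 0] fun t ↦ (2 * t) • deriv g (t ^ 2) :=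
    hf.mono fun t ht ↦ ht.deriv
  refine ⟨hf.mono fun t ht ↦ ht.differentiableAt, ?_⟩
  have := ((hasDerivAt_id (0 : ℝ)).const_mul (2 : ℝ)).smul
    (hg'.hasDerivAt.scomp_of_eq 0 (hsq 0) (by simp))
  refine (this.congr_of_eventuallyEq hf').congr_deriv ?_
  simp

namespace Matrix

theorem inv_one_sub_mul_mul_eq_mul_inv_one_sub {m n R : Type*} [Fintype m] [Fintype n]
    [DecidableEq m] [DecidableEq n] [CommRing R] (V : Matrix m n R) (W : Matrix n m R)
    (h : IsUnit (1 - V * W).det) :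
    (1 - V * W)⁻¹ * V = V * (1 - W * V)⁻¹ := by
  have h' : IsUnit (1 - W * V).det := by rwa [← det_one_sub_mul_comm]
  have hcomm : (1 - V * W) * V = V * (1 - W * V) := by
    simp only [Matrix.sub_mul, Matrix.mul_sub, Matrix.one_mul, Matrix.mul_one, Matrix.mul_assoc]
  calc (1 - V * W)⁻¹ * V = (1 - V * W)⁻¹ * V * ((1 - W * V) * (1 - W * V)⁻¹) := by
        rw [mul_nonsing_inv _ h', Matrix.mul_one]
    _ = (1 - V * W)⁻¹ * ((1 - V * W) * V) * (1 - W * V)⁻¹ := by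
        rw [hcomm]; simp only [Matrix.mul_assoc]
    _ = V * (1 - W * V)⁻¹ := by rw [← Matrix.mul_assoc, nonsing_inv_mul _ h, Matrix.one_mul]

theorem inv_one_sub_smul_mul_conjTranspose_mul {m n : Type*} [Fintype m] [Fintype n]
    [DecidableEq m] [DecidableEq n] (V : Matrix m n ℂ) {z : ℂ}
    (h : IsUnit (1 - z • (V * Vᴴ)).det) :
    (1 - z • (V * Vᴴ))⁻¹ * V * (1 - z • (Vᴴ * V))⁻¹ * Vᴴ =
      (1 - z • (V * Vᴴ))⁻¹ ^ 2 * (V * Vᴴ) := by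
  have hpush := V.inv_one_sub_mul_mul_eq_mul_inv_one_sub (z • Vᴴ) (by rwa [Matrix.mul_smul])
  rw [Matrix.mul_smul, Matrix.smul_mul] at hpush
  rw [Matrix.mul_assoc _ V, ← hpush, pow_two]
  simp only [Matrix.mul_assoc]

noncomputable def reTraceCLM (m : Type*) [Fintype m] : Matrix m m ℂ →L[ℝ] ℝ :=
  Complex.reCLM.comp (LinearMap.toContinuousLinearMap ((traceLinearMap m ℂ ℂ).restrictScalars ℝ))

section Frobenius

-- Any matrix norm would do: only the topology enters the statements below.
attribute [local instance] frobeniusNormedAddCommGroup frobeniusNormedSpace frobeniusNormedRing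
  frobeniusNormedAlgebra

variable {m : Type*} [Fintype m] [DecidableEq m] (A : Matrix m m ℂ) (α : ℕ)

theorem contDiffAt_re_trace_inverse_one_sub_smul_sq_mul_pow :
    ContDiffAt ℝ 2 (fun s : ℝ ↦ (((Ring.inverse (1 - s • A) ^ 2 * A) ^ α).trace).re) 0 :=
  (reTraceCLM m).contDiff.contDiffAt.comp 0 (contDiffAt_inverse_one_sub_smul_sq_mul_pow A 2 α)

theorem hasDerivAt_re_trace_inverse_one_sub_smul_sq_mul_pow :
    HasDerivAt (fun s : ℝ ↦ (((Ring.inverse (1 - s • A) ^ 2 * A) ^ α).trace).re)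
      (2 * α * ((A ^ (α + 1)).trace).re) 0 := by
  have := (reTraceCLM m).hasFDerivAt.comp_hasDerivAt (0 : ℝ)
    (hasDerivAt_inverse_one_sub_smul_sq_mul_pow A α)
  refine this.congr_deriv ?_
  change (((2 * α) • A ^ (α + 1)).trace).re = _
  rw [trace_smul, nsmul_eq_mul]
  simp

end Frobenius

end Matrix

theorem secondVariationFn_eventuallyEq {m n : ℕ} (V : Matrix (Fin m) (Fin n) ℂ) (α : ℕ) :
    secondVariationFn m n V α =ᶠ[𝓝 0]
      fun t ↦ (((Ring.inverse (1 - (t ^ 2) • (V * Vᴴ)) ^ 2 * (V * Vᴴ)) ^ α).trace).re := by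
  have hcont : Continuous fun t : ℝ ↦ (1 - ((t : ℂ) ^ 2) • (V * Vᴴ)).det := by fun_prop
  have hdet : ∀ᶠ t : ℝ in 𝓝 0, (1 - ((t : ℂ) ^ 2) • (V * Vᴴ)).det ≠ 0 :=
    hcont.continuousAt.eventually_ne (by simp)
  filter_upwards [hdet] with t ht
  rw [secondVariationFn, inv_one_sub_smul_mul_conjTranspose_mul V ht.isUnit,
    nonsing_inv_eq_ringInverse]
  norm_cast

theorem secondVariation_deriv2_general (m n : ℕ) (V : Matrix (Fin m) (Fin n) ℂ)
    (α : ℕ) :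
    (∀ᶠ t in nhds (0 : ℝ), DifferentiableAt ℝ (secondVariationFn m n V α) t) ∧
    DifferentiableAt ℝ (deriv (secondVariationFn m n V α)) 0 ∧
    deriv (deriv (secondVariationFn m n V α)) 0 =
      4 * α * (((V * Vᴴ) ^ (α + 1)).trace).re := by
  obtain ⟨hdiff, hderiv⟩ := eventually_differentiableAt_and_hasDerivAt_deriv_of_comp_sq
    (contDiffAt_re_trace_inverse_one_sub_smul_sq_mul_pow (V * Vᴴ) α)
    (secondVariationFn_eventuallyEq V α)
  refine ⟨hdiff, hderiv.differentiableAt, ?_⟩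
  rw [hderiv.deriv, (hasDerivAt_re_trace_inverse_one_sub_smul_sq_mul_pow (V * Vᴴ) α).deriv,
    smul_eq_mul]
  ring

/-- `φ` is twice differentiable at `t = 0` and
`φ''(0) = 4α · tr((VV*)^{α+1})`. -/
theorem secondVariation_deriv2 (m n : ℕ) (V : Matrix (Fin m) (Fin n) ℂ)
    (α : ℕ) (hα : 1 ≤ α) :
    (∀ᶠ t in nhds (0 : ℝ), DifferentiableAt ℝ (secondVariationFn m n V α) t) ∧
    DifferentiableAt ℝ (deriv (secondVariationFn m n V α)) 0 ∧
    deriv (deriv (secondVariationFn m n V α)) 0 =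
      4 * α * (((V * Vᴴ) ^ (α + 1)).trace).re :=
  secondVariation_deriv2_general m n V α
end
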